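/- Let G be the edge set of a graph on n vertices with matching number ν(G) = s, where s ≥ 1, and with no isolated vertices. If G is not a subgraph of a complete graph on 2s+1 vertices (i.e., the edges of G do not all lie within some set of 2s+1 vertices), then there exists an s-element vertex set R such that the number of edges of G disjoint from R is at most C(s, 2) + 1. -/

import Mathlib

open Finset

/-- Matching number of a family: the largest number of pairwise disjoint
members. -/
noncomputable def matchingNumber (F : Finset (Finset ℕ)) : ℕ :=
  sSup {s | ∃ M ⊆ F, M.card = s ∧ (M : Set (Finset ℕ)).PairwiseDisjoint id}

/-!
Induction on `s = ν(G)`: if the support of `G` has at least `2s + 2` vertices, some `s` of them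
meet all edges but `C(s, 2) + 1`. Together with the trivial bound for a support of at most
`2t + 1` vertices, this gives for every graph with `ν = t` a set of `t` vertices missing at most
`C(t + 1, 2)` edges.

If some vertex `v` lies in every maximum matching, then `ν(G - v) = s - 1`, and `v` together with
`s - 1` vertices for `G - v` misses at most `C(s, 2)` edges. Otherwise Gallai's lemma (proved by
switching along alternating paths) says that a maximum matching misses at most one vertex of each
component. A maximum matching misses two vertices of the support, so `G` splits into two
vertex-disjoint parts with matching numbers `t₁ + t₂ = s`, `t₁, t₂ ≥ 1`, and covering each part
leaves at most `C(t₁ + 1, 2) + C(t₂ + 1, 2) ≤ C(s, 2) + 1` edges.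
-/

section EdgeFamilies

variable {α : Type*}

abbrev IsMatching (M : Finset (Finset α)) : Prop := (M : Set (Finset α)).PairwiseDisjoint id

theorem IsMatching.mono {M M' : Finset (Finset α)} (hM : IsMatching M) (h : M' ⊆ M) :
    IsMatching M' :=
  Set.PairwiseDisjoint.subset hM (coe_subset.2 h)

def edgeGraph (G : Finset (Finset α)) : SimpleGraph α where
  Adj x y := x ≠ y ∧ ∃ e ∈ G, x ∈ e ∧ y ∈ e
  symm := ⟨fun _ _ ⟨hxy, e, he, hx, hy⟩ => ⟨hxy.symm, e, he, hy, hx⟩⟩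
  loopless := ⟨fun _ h => h.1 rfl⟩

@[simp]
theorem edgeGraph_adj {G : Finset (Finset α)} {x y : α} :
    (edgeGraph G).Adj x y ↔ x ≠ y ∧ ∃ e ∈ G, x ∈ e ∧ y ∈ e :=
  Iff.rfl

variable [DecidableEq α]

def avoiding (G : Finset (Finset α)) (R : Finset α) : Finset (Finset α) :=
  G.filter fun e => e ∩ R = ∅

theorem mem_avoiding {G : Finset (Finset α)} {R e : Finset α} :
    e ∈ avoiding G R ↔ e ∈ G ∧ Disjoint e R := by
  simp [avoiding, disjoint_iff_inter_eq_empty]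

theorem avoiding_anti {G : Finset (Finset α)} {R R' : Finset α} (h : R ⊆ R') :
    avoiding G R' ⊆ avoiding G R := fun _ he =>
  mem_avoiding.2 ⟨(mem_avoiding.1 he).1, (mem_avoiding.1 he).2.mono_right h⟩

theorem card_avoiding_le {G : Finset (Finset α)} (h2 : ∀ e ∈ G, e.card = 2) (R : Finset α) :
    (avoiding G R).card ≤ (G.sup id \ R).card.choose 2 := by
  rw [← card_powersetCard]
  refine card_le_card fun e he => ?_
  obtain ⟨heG, heR⟩ := mem_avoiding.1 he
  exact mem_powersetCard.2 ⟨subset_sdiff.2 ⟨le_sup (f := id) heG, heR⟩, h2 e heG⟩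

def CoversAllBut (G : Finset (Finset α)) (t b : ℕ) : Prop :=
  ∃ R ⊆ G.sup id, R.card ≤ t ∧ (avoiding G R).card ≤ b

theorem CoversAllBut.mono {G : Finset (Finset α)} {t t' b b' : ℕ} (h : CoversAllBut G t b)
    (ht : t ≤ t') (hb : b ≤ b') : CoversAllBut G t' b' :=
  let ⟨R, hRG, hRt, hRb⟩ := h
  ⟨R, hRG, hRt.trans ht, hRb.trans hb⟩

theorem CoversAllBut.union {G₁ G₂ : Finset (Finset α)} {t₁ t₂ b₁ b₂ : ℕ}
    (h₁ : CoversAllBut G₁ t₁ b₁) (h₂ : CoversAllBut G₂ t₂ b₂) :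
    CoversAllBut (G₁ ∪ G₂) (t₁ + t₂) (b₁ + b₂) := by
  obtain ⟨R₁, hR₁G, hR₁t, hR₁b⟩ := h₁
  obtain ⟨R₂, hR₂G, hR₂t, hR₂b⟩ := h₂
  refine ⟨R₁ ∪ R₂, by rw [sup_union]; exact union_subset_union hR₁G hR₂G,
    (card_union_le _ _).trans (by omega), ?_⟩
  have hsub : avoiding (G₁ ∪ G₂) (R₁ ∪ R₂) ⊆ avoiding G₁ R₁ ∪ avoiding G₂ R₂ := by
    intro e he
    obtain ⟨heG, heR⟩ := mem_avoiding.1 he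
    rw [disjoint_union_right] at heR
    rcases mem_union.1 heG with h | h
    · exact mem_union_left _ (mem_avoiding.2 ⟨h, heR.1⟩)
    · exact mem_union_right _ (mem_avoiding.2 ⟨h, heR.2⟩)
  exact (card_le_card hsub).trans ((card_union_le _ _).trans (by omega))

theorem CoversAllBut.of_filter_notMem {G : Finset (Finset α)} {v : α} {t b : ℕ}
    (h : CoversAllBut (G.filter (v ∉ ·)) t b) (hv : v ∈ G.sup id) :
    CoversAllBut G (t + 1) b := by
  obtain ⟨R, hRG, hRt, hRb⟩ := h
  refine ⟨insert v R, insert_subset hv (hRG.trans (sup_mono (filter_subset _ _))),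
    (card_insert_le _ _).trans (by omega), (card_le_card fun e he => ?_).trans hRb⟩
  obtain ⟨heG, heR⟩ := mem_avoiding.1 he
  rw [disjoint_insert_right] at heR
  exact mem_avoiding.2 ⟨mem_filter.2 ⟨heG, heR.1⟩, heR.2⟩

theorem coversAllBut_of_card_sup_le {G : Finset (Finset α)} (h2 : ∀ e ∈ G, e.card = 2) {t : ℕ}
    (hG : (G.sup id).card ≤ 2 * t + 1) : CoversAllBut G t ((t + 1).choose 2) := by
  obtain ⟨R, hRG, hR⟩ := exists_subset_card_eq (min_le_right t (G.sup id).card)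
  refine ⟨R, hRG, hR ▸ min_le_left _ _, (card_avoiding_le h2 R).trans ?_⟩
  exact Nat.choose_le_choose 2 (by rw [card_sdiff_of_subset hRG, hR]; omega)

theorem exists_eq_pair_of_mem {e : Finset α} {w : α} (he : e.card = 2) (hw : w ∈ e) :
    ∃ q, w ≠ q ∧ e = {w, q} := by
  obtain ⟨x, y, hxy, rfl⟩ := card_eq_two.1 he
  rcases mem_insert.1 hw with rfl | h
  · exact ⟨y, hxy, rfl⟩
  · rw [mem_singleton.1 h]
    exact ⟨x, hxy.symm, pair_comm _ _⟩

theorem IsMatching.insert {M : Finset (Finset α)} (hM : IsMatching M) {e : Finset α}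
    (he : Disjoint e (M.sup id)) : IsMatching (insert e M) := by
  rw [IsMatching, coe_insert]
  exact Set.PairwiseDisjoint.insert hM fun f hf _ => Finset.disjoint_sup_right.1 he hf

theorem IsMatching.sup_erase {M : Finset (Finset α)} (hM : IsMatching M) {e : Finset α}
    (he : e ∈ M) : (M.erase e).sup id = M.sup id \ e := by
  ext x
  simp only [mem_sup, mem_erase, id, mem_sdiff]
  constructor
  · rintro ⟨f, ⟨hfe, hfM⟩, hxf⟩
    exact ⟨⟨f, hfM, hxf⟩, fun hxe => hfe (Set.PairwiseDisjoint.elim_finset hM hfM he x hxf hxe)⟩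
  · rintro ⟨⟨f, hfM, hxf⟩, hxe⟩
    exact ⟨f, ⟨by rintro rfl; exact hxe hxf, hfM⟩, hxf⟩

theorem card_insert_of_disjoint_sup {M : Finset (Finset α)} {e : Finset α} (hne : e.Nonempty)
    (he : Disjoint e (M.sup id)) : (insert e M).card = M.card + 1 :=
  card_insert_of_notMem fun heM =>
    hne.ne_empty (disjoint_self.1 (he.mono_right (le_sup (f := id) heM)))

theorem disjoint_sup_erase_union_erase {M N : Finset (Finset α)} (hM : IsMatching M)
    (hN : IsMatching N) {w q r : α} (he : {w, q} ∈ M) (hf : {q, r} ∈ N) (hw : w ∉ N.sup id) :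
    Disjoint {w, q} ((M.erase {w, q} ∪ N.erase {q, r}).sup id) := by
  rw [sup_union, hM.sup_erase he, hN.sup_erase hf]
  simp [hw]

/-- `M'` arises from `M` by switching along an alternating path of `M ∪ N` starting at `w`: it is
as large as `M`, misses `w`, and covers at most one vertex `z` that `M` does not cover. -/
def IsSwitch (M N : Finset (Finset α)) (w : α) (M' : Finset (Finset α)) : Prop :=
  M' ⊆ M ∪ N ∧ IsMatching M' ∧ M'.card = M.card ∧ w ∉ M'.sup id ∧
    ∃ z, insert w (M'.sup id) ⊆ insert z (M.sup id)

theorem IsSwitch.insert_pair {M N M' : Finset (Finset α)} {w q r : α}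
    (h : IsSwitch (M.erase {w, q}) (N.erase {q, r}) r M') (hM : IsMatching M) (hN : IsMatching N)
    (he : {w, q} ∈ M) (hf : {q, r} ∈ N) (hw : w ∉ N.sup id) (hwq : w ≠ q) :
    IsSwitch M N w (insert {q, r} M') := by
  obtain ⟨hM'sub, hM', hM'card, hrM', z, hz⟩ := h
  have hwq₁ := (disjoint_sup_erase_union_erase hM hN he hf hw).mono_right (sup_mono hM'sub)
  have hdisj : Disjoint {q, r} (M'.sup id) := by
    simpa [hrM'] using disjoint_left.1 hwq₁ (by simp : q ∈ ({w, q} : Finset α))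
  have hwr : w ≠ r := fun h => hw (mem_sup.2 ⟨{q, r}, hf, by simp [h]⟩)
  have hMsup : M.sup id = {w, q} ∪ (M.erase {w, q}).sup id := by
    rw [hM.sup_erase he]
    exact (union_sdiff_of_subset (le_sup (f := id) he)).symm
  refine ⟨insert_subset (mem_union_right _ hf)
      (hM'sub.trans (union_subset_union (erase_subset _ _) (erase_subset _ _))),
    hM'.insert hdisj, ?_, ?_, z, ?_⟩
  · rw [card_insert_of_disjoint_sup (insert_nonempty _ _) hdisj, hM'card, card_erase_add_one he]
  · have hwM' : w ∉ M'.sup id := disjoint_left.1 hwq₁ (by simp)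
    simp [hwM', hwq, hwr]
  · calc insert w ((insert {q, r} M').sup id) = {w, q} ∪ insert r (M'.sup id) := by
          ext; simp [or_left_comm]
      _ ⊆ {w, q} ∪ insert z ((M.erase {w, q}).sup id) := union_subset_union_right hz
      _ = insert z (M.sup id) := by rw [hMsup]; ext; simp [or_left_comm]

/-- Following the alternating path of `M ∪ N` from `w`: it either ends in a switch of `M`, or it is
an augmenting path for `N`. -/
theorem exists_isSwitch_or_augment {M N : Finset (Finset α)} (hM2 : ∀ e ∈ M, e.card = 2)
    (hN2 : ∀ e ∈ N, e.card = 2) (hM : IsMatching M) (hN : IsMatching N) {w : α}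
    (hw : w ∉ N.sup id) :
    (∃ M', IsSwitch M N w M') ∨ ∃ N' ⊆ M ∪ N, IsMatching N' ∧ N'.card = N.card + 1 := by
  induction M using Finset.strongInduction generalizing N w with
  | H M ih =>
  by_cases hwM : w ∈ M.sup id
  swap
  · exact Or.inl ⟨M, subset_union_left, hM, rfl, hwM, w, subset_refl _⟩
  obtain ⟨e, heM, hwe⟩ := mem_sup.1 hwM
  obtain ⟨q, hwq, rfl⟩ := exists_eq_pair_of_mem (hM2 e heM) hwe
  by_cases hqN : q ∉ N.sup id
  · have hdisj : Disjoint {w, q} (N.sup id) := by simp [hw, hqN]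
    exact Or.inr ⟨insert {w, q} N, insert_subset (mem_union_left _ heM) subset_union_right,
      hN.insert hdisj, card_insert_of_disjoint_sup (insert_nonempty _ _) hdisj⟩
  rw [not_not] at hqN
  obtain ⟨f, hfN, hqf⟩ := mem_sup.1 hqN
  obtain ⟨r, -, rfl⟩ := exists_eq_pair_of_mem (hN2 f hfN) hqf
  rcases ih _ (erase_ssubset heM) (N := N.erase {q, r}) (fun e he => hM2 e (mem_of_mem_erase he))
      (fun e he => hN2 e (mem_of_mem_erase he)) (hM.mono (erase_subset _ _))
      (hN.mono (erase_subset _ _)) (w := r) (by simp [hN.sup_erase hfN]) with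
    ⟨M', hM'⟩ | ⟨N', hN'sub, hN', hN'card⟩
  · exact Or.inl ⟨_, hM'.insert_pair hM hN heM hfN hw hwq⟩
  · have hdisj : Disjoint {w, q} (N'.sup id) :=
      (disjoint_sup_erase_union_erase hM hN heM hfN hw).mono_right (sup_mono hN'sub)
    refine Or.inr ⟨insert {w, q} N', insert_subset (mem_union_left _ heM)
      (hN'sub.trans (union_subset_union (erase_subset _ _) (erase_subset _ _))),
      hN'.insert hdisj, ?_⟩
    rw [card_insert_of_disjoint_sup (insert_nonempty _ _) hdisj, hN'card, card_erase_add_one hfN]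

theorem pair_mem_of_edgeGraph_adj {G : Finset (Finset α)} (h2 : ∀ e ∈ G, e.card = 2) {x y : α}
    (h : (edgeGraph G).Adj x y) : {x, y} ∈ G := by
  obtain ⟨hxy, e, he, hx, hy⟩ := edgeGraph_adj.1 h
  obtain ⟨q, -, rfl⟩ := exists_eq_pair_of_mem (h2 e he) hx
  rcases mem_insert.1 hy with rfl | h
  · exact absurd rfl hxy
  · rwa [mem_singleton.1 h]

theorem card_sup_le_two_mul {M : Finset (Finset α)} (h2 : ∀ e ∈ M, e.card = 2) :
    (M.sup id).card ≤ 2 * M.card := by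
  rw [sup_eq_biUnion, mul_comm]
  exact card_biUnion_le_card_mul _ _ _ fun e he => (h2 e he).le

end EdgeFamilies

theorem choose_two_succ (n : ℕ) : (n + 1).choose 2 = n.choose 2 + n := by
  rw [Nat.choose_succ_succ' n 1, Nat.choose_one_right, add_comm]

theorem choose_two_add (p q : ℕ) : (p + q).choose 2 = p.choose 2 + q.choose 2 + p * q := by
  induction q with
  | zero => simp
  | succ q ih =>
    rw [← add_assoc, choose_two_succ, ih, choose_two_succ]
    ring

theorem choose_two_succ_add_choose_two_succ_le {p q : ℕ} (hp : 1 ≤ p) (hq : 1 ≤ q) :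
    (p + 1).choose 2 + (q + 1).choose 2 ≤ (p + q).choose 2 + 1 := by
  rw [choose_two_succ, choose_two_succ, choose_two_add]
  nlinarith

section MatchingNumber

def IsMaxMatching (G M : Finset (Finset ℕ)) : Prop :=
  M ⊆ G ∧ IsMatching M ∧ M.card = matchingNumber G

theorem bddAbove_matchingSizes (G : Finset (Finset ℕ)) :
    BddAbove {s | ∃ M ⊆ G, M.card = s ∧ IsMatching M} :=
  ⟨G.card, fun _ ⟨_, hMG, hM, _⟩ => hM ▸ card_le_card hMG⟩

theorem card_le_matchingNumber {G M : Finset (Finset ℕ)} (hMG : M ⊆ G) (hM : IsMatching M) :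
    M.card ≤ matchingNumber G :=
  le_csSup (bddAbove_matchingSizes G) ⟨M, hMG, rfl, hM⟩

theorem exists_isMaxMatching (G : Finset (Finset ℕ)) : ∃ M, IsMaxMatching G M := by
  have hmem : matchingNumber G ∈ {s | ∃ M ⊆ G, M.card = s ∧ IsMatching M} :=
    Nat.sSup_mem ⟨0, ∅, empty_subset _, rfl, by simp [IsMatching]⟩ (bddAbove_matchingSizes G)
  obtain ⟨M, hMG, hM, hMm⟩ := hmem
  exact ⟨M, hMG, hMm, hM⟩

theorem one_le_matchingNumber {G : Finset (Finset ℕ)} {e : Finset ℕ} (he : e ∈ G) :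
    1 ≤ matchingNumber G :=
  card_le_matchingNumber (singleton_subset_iff.2 he) (by simp [IsMatching])

theorem IsMaxMatching.not_disjoint_sup {G M : Finset (Finset ℕ)} (hM : IsMaxMatching G M)
    {e : Finset ℕ} (he : e ∈ G) (hne : e.Nonempty) : ¬ Disjoint e (M.sup id) := fun hdisj => by
  have := card_le_matchingNumber (insert_subset he hM.1) (hM.2.1.insert hdisj)
  rw [card_insert_of_disjoint_sup hne hdisj, hM.2.2] at this
  omega

theorem matchingNumber_filter_add_filter_not {G : Finset (Finset ℕ)} {A : Finset ℕ}
    (hA : ∀ e ∈ G, e ⊆ A ∨ Disjoint e A) :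
    matchingNumber (G.filter (· ⊆ A)) + matchingNumber (G.filter (¬ · ⊆ A)) =
      matchingNumber G := by
  obtain ⟨M, hMG, hM, hMcard⟩ := exists_isMaxMatching G
  obtain ⟨M₁, hM₁G, hM₁, hM₁card⟩ := exists_isMaxMatching (G.filter (· ⊆ A))
  obtain ⟨M₂, hM₂G, hM₂, hM₂card⟩ := exists_isMaxMatching (G.filter (¬ · ⊆ A))
  apply le_antisymm
  · have hdisj : Disjoint M₁ M₂ :=
      (disjoint_filter_filter_not _ _ _).mono hM₁G hM₂G
    have hunion : IsMatching (M₁ ∪ M₂) := by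
      rw [IsMatching, coe_union]
      refine hM₁.union hM₂ fun e he f hf _ => ?_
      have heA := (mem_filter.1 (hM₁G he)).2
      obtain ⟨hfG, hfA⟩ := mem_filter.1 (hM₂G hf)
      exact ((hA f hfG).resolve_left hfA).symm.mono_left heA
    have := card_le_matchingNumber (union_subset (hM₁G.trans (filter_subset _ _))
      (hM₂G.trans (filter_subset _ _))) hunion
    rwa [card_union_of_disjoint hdisj, hM₁card, hM₂card] at this
  · rw [← hMcard, ← card_filter_add_card_filter_not (s := M) (· ⊆ A)]
    exact add_le_add
      (card_le_matchingNumber (filter_subset_filter _ hMG) (hM.mono (filter_subset _ _)))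
      (card_le_matchingNumber (filter_subset_filter _ hMG) (hM.mono (filter_subset _ _)))

def IsEssential (G : Finset (Finset ℕ)) (v : ℕ) : Prop :=
  ∀ M, IsMaxMatching G M → v ∈ M.sup id

theorem IsEssential.mem_sup_id {G : Finset (Finset ℕ)} {v : ℕ} (hv : IsEssential G v) :
    v ∈ G.sup id :=
  let ⟨M, hM⟩ := exists_isMaxMatching G
  sup_mono (f := id) hM.1 (hv M hM)

theorem IsEssential.matchingNumber_filter_notMem_add_one {G : Finset (Finset ℕ)} {v : ℕ}
    (hv : IsEssential G v) : matchingNumber (G.filter (v ∉ ·)) + 1 = matchingNumber G := by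
  apply le_antisymm
  · obtain ⟨M', hM'G, hM', hM'card⟩ := exists_isMaxMatching (G.filter (v ∉ ·))
    have hle := card_le_matchingNumber (hM'G.trans (filter_subset _ _)) hM'
    have hne : M'.card ≠ matchingNumber G := fun h => by
      obtain ⟨e, he, hve⟩ := mem_sup.1 (hv M' ⟨hM'G.trans (filter_subset _ _), hM', h⟩)
      exact (mem_filter.1 (hM'G he)).2 hve
    omega
  · obtain ⟨M, hMG, hM, hMcard⟩ := exists_isMaxMatching G
    have hv1 : (M.filter (v ∈ ·)).card ≤ 1 := card_le_one.2 fun e he f hf =>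
      Set.PairwiseDisjoint.elim_finset hM (mem_filter.1 he).1 (mem_filter.1 hf).1 v
        (mem_filter.1 he).2 (mem_filter.1 hf).2
    have : (M.filter (v ∉ ·)).card ≤ matchingNumber (G.filter (v ∉ ·)) :=
      card_le_matchingNumber (filter_subset_filter _ hMG) (hM.mono (filter_subset _ _))
    rw [← hMcard, ← card_filter_add_card_filter_not (s := M) (v ∈ ·)]
    omega

/-- Gallai's lemma. Along a path `a – c – ⋯ – u'`, switching `M` against a maximum matching that
misses `c` yields a maximum matching missing `c` and `u'`, or one missing both `a` and `c`. -/
theorem eq_of_reachable_of_forall_not_isEssential {G : Finset (Finset ℕ)}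
    (h2 : ∀ e ∈ G, e.card = 2) (hG : ∀ v, ¬ IsEssential G v) {u u' : ℕ}
    (hreach : (edgeGraph G).Reachable u u') {M : Finset (Finset ℕ)} (hM : IsMaxMatching G M)
    (hu : u ∉ M.sup id) (hu' : u' ∉ M.sup id) : u = u' := by
  rw [SimpleGraph.reachable_iff_reflTransGen] at hreach
  induction hreach using Relation.ReflTransGen.head_induction_on generalizing M with
  | refl => rfl
  | @head a c hac _ ih =>
  by_contra hau'
  have hacG := pair_mem_of_edgeGraph_adj h2 hac
  by_cases hcM : c ∉ M.sup id
  · exact hM.not_disjoint_sup hacG (insert_nonempty _ _) (by simp [hu, hcM])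
  rw [not_not] at hcM
  obtain ⟨N, hN, hcN⟩ : ∃ N, IsMaxMatching G N ∧ c ∉ N.sup id := by
    simpa [IsEssential] using hG c
  have hMN : M ∪ N ⊆ G := union_subset hM.1 hN.1
  rcases exists_isSwitch_or_augment (fun e he => h2 e (hM.1 he)) (fun e he => h2 e (hN.1 he))
      hM.2.1 hN.2.1 hcN with ⟨M', hM'sub, hM', hM'card, hcM', z, hz⟩ | ⟨N', hN'sub, hN', hN'card⟩
  · have hM'max : IsMaxMatching G M' := ⟨hM'sub.trans hMN, hM', hM'card.trans hM.2.2⟩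
    by_cases haM' : a ∈ M'.sup id
    · have haz : a = z := by simpa [hu] using hz (mem_insert_of_mem haM')
      have hu'M' : u' ∉ M'.sup id := fun h => by
        have hu'z : u' = z := by simpa [hu'] using hz (mem_insert_of_mem h)
        exact hau' (haz.trans hu'z.symm)
      exact hu' (ih hM'max hcM' hu'M' ▸ hcM)
    · exact hM'max.not_disjoint_sup hacG (insert_nonempty _ _) (by simp [haM', hcM'])
  · have := card_le_matchingNumber (hN'sub.trans hMN) hN'
    rw [hN'card, hN.2.2] at this
    omega

theorem exists_separation_of_forall_not_isEssential {G : Finset (Finset ℕ)}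
    (h2 : ∀ e ∈ G, e.card = 2) (hG : ∀ v, ¬ IsEssential G v)
    (hsupp : 2 * matchingNumber G + 2 ≤ (G.sup id).card) :
    ∃ A : Finset ℕ, (∀ e ∈ G, e ⊆ A ∨ Disjoint e A) ∧ (∃ e ∈ G, e ⊆ A) ∧ ∃ e ∈ G, ¬ e ⊆ A := by
  classical
  obtain ⟨M, hM⟩ := exists_isMaxMatching G
  have hMsup : (M.sup id).card ≤ 2 * matchingNumber G :=
    hM.2.2 ▸ card_sup_le_two_mul fun e he => h2 e (hM.1 he)
  obtain ⟨u, hu, u', hu', huu'⟩ := one_lt_card.1 (show 1 < (G.sup id \ M.sup id).card by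
    have := le_card_sdiff (M.sup id) (G.sup id)
    omega)
  rw [mem_sdiff] at hu hu'
  set A := (G.sup id).filter ((edgeGraph G).Reachable u)
  have hclosed : ∀ e ∈ G, ∀ x ∈ e, x ∈ A → e ⊆ A := by
    intro e he x hxe hxA y hye
    refine mem_filter.2 ⟨le_sup (f := id) he hye, ?_⟩
    obtain rfl | hxy := eq_or_ne x y
    · exact (mem_filter.1 hxA).2
    · exact (mem_filter.1 hxA).2.trans (edgeGraph_adj.2 ⟨hxy, e, he, hxe, hye⟩).reachable
  obtain ⟨e, he, hue⟩ := mem_sup.1 hu.1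
  obtain ⟨e', he', hue'⟩ := mem_sup.1 hu'.1
  refine ⟨A, fun f hf => ?_, ⟨e, he, hclosed e he u hue (mem_filter.2 ⟨hu.1, .rfl⟩)⟩,
    e', he', fun h => huu' ?_⟩
  · by_cases hfA : Disjoint f A
    · exact Or.inr hfA
    · obtain ⟨x, hxf, hxA⟩ := not_disjoint_iff.1 hfA
      exact Or.inl (hclosed f hf x hxf hxA)
  · exact eq_of_reachable_of_forall_not_isEssential h2 hG (mem_filter.1 (h hue')).2 hM hu.2 hu'.2

theorem coversAllBut_succ_choose_two {H : Finset (Finset ℕ)} (h2 : ∀ e ∈ H, e.card = 2)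
    (hlarge : 2 * matchingNumber H + 2 ≤ (H.sup id).card →
      CoversAllBut H (matchingNumber H) ((matchingNumber H).choose 2 + 1)) :
    CoversAllBut H (matchingNumber H) ((matchingNumber H + 1).choose 2) := by
  by_cases hsmall : (H.sup id).card ≤ 2 * matchingNumber H + 1
  · exact coversAllBut_of_card_sup_le h2 hsmall
  obtain ⟨x, hx⟩ := card_pos.1 (show 0 < (H.sup id).card by omega)
  obtain ⟨e, he, -⟩ := mem_sup.1 hx
  have := one_le_matchingNumber he
  refine (hlarge (by omega)).mono le_rfl ?_
  rw [choose_two_succ]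
  omega

theorem coversAllBut_choose_two_add_one {G : Finset (Finset ℕ)} (h2 : ∀ e ∈ G, e.card = 2)
    (hsupp : 2 * matchingNumber G + 2 ≤ (G.sup id).card) :
    CoversAllBut G (matchingNumber G) ((matchingNumber G).choose 2 + 1) := by
  induction hs : matchingNumber G using Nat.strong_induction_on generalizing G with
  | _ s ih =>
  have hsmaller : ∀ H ⊆ G, matchingNumber H < s →
      CoversAllBut H (matchingNumber H) ((matchingNumber H + 1).choose 2) :=
    fun H hHG hlt => coversAllBut_succ_choose_two (fun e he => h2 e (hHG he))
      fun hH => ih _ hlt (fun e he => h2 e (hHG he)) hH rfl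
  by_cases hess : ∃ v, IsEssential G v
  · obtain ⟨v, hv⟩ := hess
    have hν := hv.matchingNumber_filter_notMem_add_one
    have := (hsmaller _ (filter_subset _ _) (by omega)).of_filter_notMem hv.mem_sup_id
    exact this.mono (by omega) (by rw [hν, hs]; omega)
  push Not at hess
  obtain ⟨A, hA, ⟨e₁, he₁, he₁A⟩, e₂, he₂, he₂A⟩ :=
    exists_separation_of_forall_not_isEssential h2 hess hsupp
  have hsum := matchingNumber_filter_add_filter_not hA
  have h₁ := one_le_matchingNumber (G := G.filter (· ⊆ A)) (mem_filter.2 ⟨he₁, he₁A⟩)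
  have h₂ := one_le_matchingNumber (G := G.filter (¬ · ⊆ A)) (mem_filter.2 ⟨he₂, he₂A⟩)
  have := (hsmaller _ (filter_subset (· ⊆ A) G) (by omega)).union
    (hsmaller _ (filter_subset (¬ · ⊆ A) G) (by omega))
  rw [filter_union_filter_not_eq] at this
  exact this.mono (by omega)
    ((choose_two_succ_add_choose_two_succ_le h₁ h₂).trans (by rw [hsum, hs]))

end MatchingNumber

theorem stmt_19_general (n s : ℕ)
    (G : Finset (Finset ℕ)) (hG : G ⊆ (Finset.Icc 1 n).powersetCard 2)
    (hν : matchingNumber G = s)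
    (hnot : ¬ ∃ W : Finset ℕ, W.card = 2 * s + 1 ∧ ∀ e ∈ G, e ⊆ W) :
    ∃ R ⊆ Finset.Icc 1 n, R.card = s ∧
      (G.filter fun e => e ∩ R = ∅).card ≤ s.choose 2 + 1 := by
  have h2 : ∀ e ∈ G, e.card = 2 := fun e he => (mem_powersetCard.1 (hG he)).2
  have hsupIcc : G.sup id ⊆ Icc 1 n := Finset.sup_le fun e he => (mem_powersetCard.1 (hG he)).1
  have hsupp : 2 * s + 2 ≤ (G.sup id).card := by
    by_contra! hsmall
    obtain ⟨W, hW, hWcard⟩ := Infinite.exists_superset_card_eq (G.sup id) (2 * s + 1) (by omega)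
    exact hnot ⟨W, hWcard, fun e he => (le_sup (f := id) he).trans hW⟩
  obtain ⟨R, hRG, hRs, hR⟩ := coversAllBut_choose_two_add_one h2 (hν ▸ hsupp)
  rw [hν] at hRs hR
  obtain ⟨R', hRR', hR'n, hR's⟩ := exists_subsuperset_card_eq (hRG.trans hsupIcc) hRs
    (by have := card_le_card hsupIcc; omega)
  exact ⟨R', hR'n, hR's, (card_le_card (avoiding_anti hRR')).trans hR⟩

theorem stmt_19 (n s : ℕ) (hs : 1 ≤ s)
    (G : Finset (Finset ℕ)) (hG : G ⊆ (Finset.Icc 1 n).powersetCard 2)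
    (hν : matchingNumber G = s)
    (hiso : ∀ v ∈ Finset.Icc 1 n, ∃ e ∈ G, v ∈ e)
    (hnot : ¬ ∃ W : Finset ℕ, W.card = 2 * s + 1 ∧ ∀ e ∈ G, e ⊆ W) :
    ∃ R ⊆ Finset.Icc 1 n, R.card = s ∧
      (G.filter fun e => e ∩ R = ∅).card ≤ s.choose 2 + 1 :=
  stmt_19_general n s G hG hν hnot
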